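/- arXiv:2605.16820 — 2 statements merged into one kernel-verified Lean document; each statement's English description precedes it below -/
import Mathlib

section
/- If σ is infinite and v ≠ w, then no finite sequences of stores can make constant arrays with different defaults equal: for all lists L₁ L₂ : List (σ × τ), folding store over L₁ starting from const v is not equal to folding store over L₂ starting from const w. -/
def store {σ τ : Type*} [DecidableEq σ] (a : σ → τ) (i : σ) (u : τ) : σ → τ :=
  fun j => if j = i then u else a j

def constArr {σ τ : Type*} (v : τ) : σ → τ := fun _ => v

def foldStore {σ τ : Type*} [DecidableEq σ] (L : List (σ × τ)) (a : σ → τ) : σ → τ :=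
  L.foldl (fun b p => store b p.1 p.2) a

/-! A store changes an array at a single index, so a finite sequence of stores leaves every
index outside a finite set untouched. Since `σ` is infinite, some index escapes the stores of
both lists, and there the two arrays read `v` and `w`. -/

section FoldStore

variable {σ τ : Type*} [DecidableEq σ]

lemma store_apply_of_ne (a : σ → τ) {i j : σ} (u : τ) (h : j ≠ i) : store a i u j = a j :=
  if_neg h

lemma foldStore_cons (p : σ × τ) (L : List (σ × τ)) (a : σ → τ) :
    foldStore (p :: L) a = foldStore L (store a p.1 p.2) :=
  rfl

lemma foldStore_apply_of_notMem (L : List (σ × τ)) (a : σ → τ) {j : σ}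
    (h : j ∉ L.map Prod.fst) : foldStore L a j = a j := by
  induction L generalizing a with
  | nil => rfl
  | cons p L ih =>
    simp only [List.map_cons, List.mem_cons, not_or] at h
    rw [foldStore_cons, ih _ h.2, store_apply_of_ne _ _ h.1]

lemma finite_setOf_foldStore_apply_ne (L : List (σ × τ)) (a : σ → τ) :
    {j | foldStore L a j ≠ a j}.Finite :=
  (L.map Prod.fst).finite_toSet.subset fun _ hj =>
    by_contra fun h => hj (foldStore_apply_of_notMem L a h)

end FoldStore

theorem infinite_const_stores_ne {σ τ : Type*} [DecidableEq σ] [Infinite σ]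
    (v w : τ) (hvw : v ≠ w) :
    ∀ L₁ L₂ : List (σ × τ),
      foldStore L₁ (constArr v) ≠ foldStore L₂ (constArr w) := by
  intro L₁ L₂ h
  obtain ⟨j, hj⟩ := ((finite_setOf_foldStore_apply_ne L₁ (constArr v)).union
    (finite_setOf_foldStore_apply_ne L₂ (constArr w))).exists_notMem
  simp only [Set.mem_union, Set.mem_ofPred_eq, not_or, not_not] at hj
  have hj₁ : foldStore L₁ (constArr v) j = v := hj.1
  have hj₂ : foldStore L₂ (constArr w) j = w := hj.2
  exact hvw (hj₁.symm.trans ((congrFun h j).trans hj₂))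
end

section
/- If v ≠ w and the store sequences s_v (stores at indices i₁,…,i_l applied to const v) and s_w (stores at indices j₁,…,j_k applied to const w) are equal as arrays, then every element of σ equals one of the indices i₁,…,i_l, j₁,…,j_k; in particular if σ is a fintype then l + k ≥ card σ. -/
theorem Fintype.card_le_length_of_forall_mem {α : Type*} [Fintype α] (l : List α)
    (h : ∀ x, x ∈ l) : Fintype.card α ≤ l.length :=
  (Fintype.card_le_of_surjective l.get fun x => List.mem_iff_get.mp (h x)).trans_eq
    (Fintype.card_fin _)

section foldStore

variable {σ τ : Type*} [DecidableEq σ]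

theorem foldStore_apply_of_not_mem (L : List (σ × τ)) (a : σ → τ) {x : σ}
    (hx : x ∉ L.map Prod.fst) : foldStore L a x = a x := by
  induction L generalizing a with
  | nil => rfl
  | cons p L ih =>
    simp only [List.map_cons, List.mem_cons, not_or] at hx
    rw [foldStore, List.foldl_cons, ← foldStore, ih _ hx.2, store, if_neg hx.1]

theorem mem_fst_of_foldStore_eq {a b : σ → τ} (L₁ L₂ : List (σ × τ))
    (heq : foldStore L₁ a = foldStore L₂ b) {x : σ} (hx : a x ≠ b x) :
    x ∈ L₁.map Prod.fst ∨ x ∈ L₂.map Prod.fst := by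
  by_contra! h
  rw [← foldStore_apply_of_not_mem L₁ a h.1, ← foldStore_apply_of_not_mem L₂ b h.2, heq] at hx
  exact hx rfl

end foldStore

theorem finite_const_eq_covers {σ τ : Type*} [DecidableEq σ] [Fintype σ]
    (v w : τ) (hvw : v ≠ w) (L₁ L₂ : List (σ × τ))
    (heq : foldStore L₁ (constArr v) = foldStore L₂ (constArr w)) :
    (∀ x : σ, x ∈ L₁.map Prod.fst ∨ x ∈ L₂.map Prod.fst) ∧
      L₁.length + L₂.length ≥ Fintype.card σ := by
  have hcover (x : σ) : x ∈ L₁.map Prod.fst ∨ x ∈ L₂.map Prod.fst :=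
    mem_fst_of_foldStore_eq L₁ L₂ heq hvw
  refine ⟨hcover, ?_⟩
  simpa using Fintype.card_le_length_of_forall_mem (L₁.map Prod.fst ++ L₂.map Prod.fst)
    fun x => List.mem_append.mpr (hcover x)
end
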